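/- If Γ is a disconnected homomorphism homogeneous oriented graph, then any two of its weakly connected components have the same age, i.e., the same class of finite oriented graphs embeddable in them. -/

import Mathlib

def IsOriented {V : Type*} (E : V → V → Prop) : Prop := ∀ x y, E x y → ¬ E y x

def IsLocHom {V : Type*} (E : V → V → Prop) (A : Finset V) (f : V → V) : Prop :=
  ∀ x ∈ A, ∀ y ∈ A, E x y → E (f x) (f y)

def IsHH {V : Type*} (E : V → V → Prop) : Prop :=
  ∀ (A : Finset V) (f : V → V), IsLocHom E A f →
    ∃ g : V → V, (∀ x y, E x y → E (g x) (g y)) ∧ ∀ x ∈ A, g x = f x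

/-!
An endomorphism maps a weakly connected component into a weakly connected component, and
homomorphism homogeneity lets us send any vertex `u` to any vertex `v` by an endomorphism
(a one-point map is a local homomorphism, as there are no loops). On a tournament an
endomorphism of an oriented graph is automatically an embedding: adjacent vertices go to
adjacent, hence distinct, vertices, and orientation forbids reversing an arc. It remains to
see that every component is a tournament: if `a, b` were non-adjacent in one component, the
map fixing `a` and sending `b` into another component would be a local homomorphism, and
its extension would carry a semi-walk from `a` to `b` to one leaving the component of `a`.
-/

section

variable {V : Type*} {E : V → V → Prop}

local notation "Conn" => Relation.ReflTransGen (fun s t => E s t ∨ E t s)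

lemma IsOriented.irrefl (hor : IsOriented E) (x : V) : ¬ E x x := fun h => hor x x h h

lemma isLocHom_of_forall_not_adj {A : Finset V} (hA : ∀ x ∈ A, ∀ y ∈ A, ¬ E x y) (f : V → V) :
    IsLocHom E A f := fun x hx y hy hxy => absurd hxy (hA x hx y hy)

lemma conn_symm {a b : V} (h : Conn a b) : Conn b a :=
  have : Std.Symm fun s t => E s t ∨ E t s := ⟨fun _ _ h => h.symm⟩
  Std.Symm.symm _ _ h

lemma conn_map {g : V → V} (hg : ∀ x y, E x y → E (g x) (g y)) {a b : V} (h : Conn a b) :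
    Conn (g a) (g b) :=
  h.lift g fun _ _ => Or.imp (hg _ _) (hg _ _)

lemma exists_not_conn (hdisc : ∃ x y : V, ¬ Conn x y) (a : V) : ∃ c, ¬ Conn a c := by
  obtain ⟨x, y, hxy⟩ := hdisc
  by_cases hax : Conn a x
  · exact ⟨y, fun hay => hxy ((conn_symm hax).trans hay)⟩
  · exact ⟨x, hax⟩

lemma IsHH.exists_hom_apply_eq (hor : IsOriented E) (hhh : IsHH E) (u v : V) :
    ∃ g : V → V, (∀ x y, E x y → E (g x) (g y)) ∧ g u = v := by
  have hloc : IsLocHom E {u} (fun _ => v) :=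
    isLocHom_of_forall_not_adj (by simpa using hor.irrefl u) _
  obtain ⟨g, hg, hgu⟩ := hhh _ _ hloc
  exact ⟨g, hg, hgu u (Finset.mem_singleton_self u)⟩

lemma IsHH.adj_of_conn (hor : IsOriented E) (hhh : IsHH E) (hdisc : ∃ x y : V, ¬ Conn x y)
    {a b : V} (hne : a ≠ b) (hab : Conn a b) : E a b ∨ E b a := by
  classical
  by_contra hadj
  rw [not_or] at hadj
  obtain ⟨c, hc⟩ := exists_not_conn hdisc a
  have hloc : IsLocHom E {a, b} (fun z => if z = b then c else z) := by
    refine isLocHom_of_forall_not_adj ?_ _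
    simp only [Finset.mem_insert, Finset.mem_singleton]
    rintro x (rfl | rfl) y (rfl | rfl)
    exacts [hor.irrefl _, hadj.1, hadj.2, hor.irrefl _]
  obtain ⟨g, hg, hgf⟩ := hhh _ _ hloc
  have hga : g a = a := by simpa [hne] using hgf a (by simp)
  have hgb : g b = c := by simpa using hgf b (by simp)
  exact hc (hga ▸ hgb ▸ conn_map hg hab)

lemma IsOriented.injOn_and_iff_of_pairwise_adj (hor : IsOriented E) {g : V → V}
    (hg : ∀ x y, E x y → E (g x) (g y)) {A : Set V}
    (hA : A.Pairwise fun a b => E a b ∨ E b a) :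
    Set.InjOn g A ∧ ∀ a ∈ A, ∀ b ∈ A, (E a b ↔ E (g a) (g b)) := by
  refine ⟨fun a ha b hb hgab => ?_, fun a ha b hb => ⟨hg a b, fun hgab => ?_⟩⟩
  · by_contra hne
    rcases hA ha hb hne with h | h
    · exact hor.irrefl (g b) (hgab ▸ hg a b h)
    · exact hor.irrefl (g a) (hgab ▸ hg b a h)
  · rcases eq_or_ne a b with rfl | hne
    · exact absurd hgab (hor.irrefl _)
    · exact (hA ha hb hne).resolve_right fun h => hor _ _ (hg b a h) hgab

end

theorem components_same_age {V : Type*} (E : V → V → Prop)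
    (hor : IsOriented E) (hhh : IsHH E)
    (hdisc : ∃ x y : V, ¬ Relation.ReflTransGen (fun a b => E a b ∨ E b a) x y) :
    ∀ u v : V, ∀ A : Finset V,
      (∀ a ∈ A, Relation.ReflTransGen (fun s t => E s t ∨ E t s) u a) →
      ∃ g : V → V, Set.InjOn g A ∧
        (∀ a ∈ A, Relation.ReflTransGen (fun s t => E s t ∨ E t s) v (g a)) ∧
        (∀ a ∈ A, ∀ b ∈ A, (E a b ↔ E (g a) (g b))) := by
  intro u v A hA
  obtain ⟨g, hg, hgu⟩ := hhh.exists_hom_apply_eq hor u v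
  have htourn : (A : Set V).Pairwise fun a b => E a b ∨ E b a := fun a ha b hb hne =>
    hhh.adj_of_conn hor hdisc hne ((conn_symm (hA a ha)).trans (hA b hb))
  obtain ⟨hinj, hiff⟩ := hor.injOn_and_iff_of_pairwise_adj hg htourn
  exact ⟨g, hinj, fun a ha => hgu ▸ conn_map hg (hA a ha), hiff⟩
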